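/- arXiv:2304.08459 — 2 statements merged into one kernel-verified Lean document; each statement's English description precedes it below -/
import Mathlib

section
/- Let G be a finite group acting transitively on a finite set Ω with |Ω| ≥ 2. Then G contains a derangement, i.e., an element fixing no point of Ω. -/
open MulAction Finset

/-- Jordan's theorem: a finite group acting transitively on a finite set with
at least two points contains a derangement. -/
theorem stmt_4 {G Ω : Type*} [Group G] [Fintype G] [Fintype Ω] [MulAction G Ω]
    (htrans : MulAction.IsPretransitive G Ω) (hcard : 2 ≤ Fintype.card Ω) :
    ∃ g : G, ∀ ω : Ω, g • ω ≠ ω := by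
  classical
  by_contra h
  push_neg at h
  have hne : Nonempty Ω := Fintype.card_pos_iff.mp (by omega)
  have hburn := MulAction.sum_card_fixedBy_eq_card_orbits_mul_card_group G Ω
  have horb : Fintype.card (Quotient (MulAction.orbitRel G Ω)) = 1 := by
    have h1 : Subsingleton (Quotient (MulAction.orbitRel G Ω)) := by
      constructor
      intro a b
      induction a using Quotient.inductionOn
      induction b using Quotient.inductionOn
      exact (Quotient.sound (htrans.exists_smul_eq _ _)).symm
    have h2 : Nonempty (Quotient (MulAction.orbitRel G Ω)) := ⟨Quotient.mk _ (Classical.arbitrary Ω)⟩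
    have := Fintype.card_le_one_iff_subsingleton.mpr h1
    have := Fintype.card_pos_iff.mpr h2
    omega
  rw [horb, one_mul] at hburn
  -- each term is ≥ 1
  have hpos : ∀ g : G, 1 ≤ Fintype.card (MulAction.fixedBy Ω g) := by
    intro g
    obtain ⟨ω, hω⟩ := h g
    exact Fintype.card_pos_iff.mpr ⟨⟨ω, hω⟩⟩
  have hone : Fintype.card (MulAction.fixedBy Ω (1 : G)) = Fintype.card Ω := by
    apply Fintype.card_congr
    apply Equiv.subtypeUnivEquiv
    intro ω
    exact one_smul G ω
  have hkey : Fintype.card G + 1 ≤ ∑ g : G, Fintype.card (MulAction.fixedBy Ω g) := by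
    rw [← Finset.sum_erase_add _ _ (Finset.mem_univ (1 : G))]
    have h1 : Fintype.card G - 1 ≤ ∑ g ∈ Finset.univ.erase (1 : G),
        Fintype.card (MulAction.fixedBy Ω g) := by
      calc Fintype.card G - 1 = (Finset.univ.erase (1 : G)).card := by
            rw [Finset.card_erase_of_mem (Finset.mem_univ _), Finset.card_univ]
        _ ≤ _ := by simpa using Finset.sum_le_sum fun g (_ : g ∈ Finset.univ.erase 1) => hpos g
    have hGpos : 1 ≤ Fintype.card G := Fintype.card_pos
    omega
  omega
end

section
/- Let G be a transitive permutation group on a finite set Ω. Then G is primitive if and only if every non-diagonal orbital graph of G on Ω is connected. -/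
open MulAction Pointwise

/-- The (undirected) orbital graph of the orbital of `G` on `Ω × Ω` containing
the pair `(α, β)`: vertices are points of `Ω`, and `x, y` are adjacent iff
`x ≠ y` and `(x, y)` or `(y, x)` lies in the orbit of `(α, β)` under the
diagonal action. -/
def orbitalGraph (G Ω : Type*) [Group G] [MulAction G Ω] (α β : Ω) :
    SimpleGraph Ω where
  Adj x y := x ≠ y ∧
    ((x, y) ∈ MulAction.orbit G (α, β) ∨ (y, x) ∈ MulAction.orbit G (α, β))
  symm := by
    constructor
    intro x y ⟨hne, h⟩
    exact ⟨hne.symm, h.symm⟩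
  loopless := by
    constructor
    intro x ⟨hne, _⟩
    exact hne rfl

lemma orbitalGraph_adj_smul {G Ω : Type*} [Group G] [MulAction G Ω] (α β : Ω)
    (g : G) {x y : Ω} (h : (orbitalGraph G Ω α β).Adj x y) :
    (orbitalGraph G Ω α β).Adj (g • x) (g • y) := by
  obtain ⟨hne, h⟩ := h
  refine ⟨fun hc => hne (smul_left_cancel g hc), ?_⟩
  rcases h with ⟨t, ht⟩ | ⟨t, ht⟩
  · exact Or.inl ⟨g * t, by show (g * t) • (α, β) = _; rw [mul_smul]; rw [show t • (α, β) = _ from ht]; rfl⟩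
  · exact Or.inr ⟨g * t, by show (g * t) • (α, β) = _; rw [mul_smul]; rw [show t • (α, β) = _ from ht]; rfl⟩

lemma orbitalGraph_reachable_smul {G Ω : Type*} [Group G] [MulAction G Ω] (α β : Ω)
    (g : G) {x y : Ω} (h : (orbitalGraph G Ω α β).Reachable x y) :
    (orbitalGraph G Ω α β).Reachable (g • x) (g • y) := by
  obtain ⟨w⟩ := h
  induction w with
  | nil => exact SimpleGraph.Reachable.refl _
  | cons hadj _ ih =>
    exact (SimpleGraph.Adj.reachable (orbitalGraph_adj_smul α β g hadj)).trans ih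

/-- Higman's theorem: a transitive group `G` on a finite set `Ω` is primitive
(every block is trivial) iff every non-diagonal orbital graph is connected. -/
theorem stmt_9 {G Ω : Type*} [Group G] [Fintype G] [Fintype Ω] [MulAction G Ω]
    (htrans : MulAction.IsPretransitive G Ω) :
    (∀ B : Set Ω, MulAction.IsBlock G B → B.Subsingleton ∨ B = Set.univ) ↔
      ∀ α β : Ω, α ≠ β → (orbitalGraph G Ω α β).Connected := by
  constructor
  · -- primitive → connected
    intro hprim α β hne
    set C : Set Ω := {y | (orbitalGraph G Ω α β).Reachable α y} with hC
    have hCblock : MulAction.IsBlock G C := by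
      rw [MulAction.isBlock_iff_smul_eq_of_nonempty]
      intro g ⟨z, hz1, hz2⟩
      obtain ⟨w, hw, rfl⟩ := hz1
      have hw' : (orbitalGraph G Ω α β).Reachable α w := hw
      have hz2' : (orbitalGraph G Ω α β).Reachable α (g • w) := hz2
      have h1 : (orbitalGraph G Ω α β).Reachable α (g • α) :=
        hz2'.trans (orbitalGraph_reachable_smul α β g hw').symm
      ext y
      constructor
      · rintro ⟨u, hu, rfl⟩
        have hu' : (orbitalGraph G Ω α β).Reachable α u := hu
        exact h1.trans (orbitalGraph_reachable_smul α β g hu')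
      · intro hy
        refine ⟨g⁻¹ • y, ?_, by simp⟩
        have hy' : (orbitalGraph G Ω α β).Reachable α y := hy
        have := orbitalGraph_reachable_smul α β g⁻¹ (h1.symm.trans hy')
        show (orbitalGraph G Ω α β).Reachable α (g⁻¹ • y)
        simpa using this
    have hαC : α ∈ C := SimpleGraph.Reachable.refl _
    have hβC : β ∈ C :=
      SimpleGraph.Adj.reachable ⟨hne, Or.inl (MulAction.mem_orbit_self _)⟩
    rcases hprim C hCblock with hsub | huniv
    · exact absurd (hsub hαC hβC) hne
    · haveI : Nonempty Ω := ⟨α⟩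
      refine ⟨fun x y => ?_⟩
      have hx : x ∈ C := huniv ▸ Set.mem_univ x
      have hy : y ∈ C := huniv ▸ Set.mem_univ y
      exact (show (orbitalGraph G Ω α β).Reachable α x from hx).symm.trans
        (show (orbitalGraph G Ω α β).Reachable α y from hy)
  · -- connected → primitive
    intro hconn B hB
    by_cases hsub : B.Subsingleton
    · exact Or.inl hsub
    right
    obtain ⟨α, hα, β, hβ, hne⟩ := Set.not_subsingleton_iff.mp hsub
    -- B is closed under adjacency in the orbital graph of (α, β)
    have hclosed : ∀ x y : Ω, (orbitalGraph G Ω α β).Adj x y → x ∈ B → y ∈ B := by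
      intro x y ⟨_, h⟩ hx
      rcases h with ⟨g, hg⟩ | ⟨g, hg⟩
      · have h1 : g • α = x := congrArg Prod.fst hg
        have h2 : g • β = y := congrArg Prod.snd hg
        have : g • B = B := hB.smul_eq_of_mem hα (h1 ▸ hx)
        exact this ▸ (h2 ▸ Set.smul_mem_smul_set hβ)
      · have h1 : g • α = y := congrArg Prod.fst hg
        have h2 : g • β = x := congrArg Prod.snd hg
        have : g • B = B := hB.smul_eq_of_mem hβ (h2 ▸ hx)
        exact this ▸ (h1 ▸ Set.smul_mem_smul_set hα)
    have hreach : ∀ x y : Ω, (orbitalGraph G Ω α β).Reachable x y → x ∈ B → y ∈ B := by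
      intro x y ⟨w⟩
      induction w with
      | nil => exact id
      | cons hadj _ ih => exact fun hx => ih (hclosed _ _ hadj hx)
    ext y
    simp only [Set.mem_univ, iff_true]
    exact hreach α y ((hconn α β hne).preconnected α y) hα
end
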